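/- If x, y are permutations of [n] with x ≥_B y in Bruhat order and x is an AR permutation, then x ⊵_R y. -/

import Mathlib

/-! Take `a = x` and `b = x ⊔ y`. Since `x` is injective every car of `a` parks at its preference,
so `(a, b)` is an IPF with `O(a) = x`. Parking `b*` is parking `y` from the right, and it has
outcome `y*` exactly when every spot `s` with `y i < s ≤ x i` is taken by a later car, i.e.
`i < y⁻¹ s`. If instead `y⁻¹ s < i`, count the first `i` positions whose value is below `s`:
the AR condition gives at least `min s i` of them for `x`, while `y` has at most `min s i - 1`,
contradicting `x ≥_B y`. -/

/-- `o` is the outcome of running parking Algorithm A on preference vector `a`: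
car `i` parks in the first unoccupied spot in `[a i, n]`, and every car parks. -/
def IsAOutcome {n : ℕ} (a o : Fin n → Fin n) : Prop :=
  Function.Injective o ∧ ∀ i, a i ≤ o i ∧
    ∀ s, a i ≤ s → s < o i → ∃ j, j < i ∧ o j = s

/-- `a` is a parking function. -/
def IsParkingFunction {n : ℕ} (a : Fin n → Fin n) : Prop :=
  ∃ o, IsAOutcome a o

/-- `o` is the outcome of running parking Algorithm B on the pair `(a, b)`:
car `i` parks in the first unoccupied spot in `[a i, b i]`, and every car parks. -/
def IsBOutcome {n : ℕ} (a b o : Fin n → Fin n) : Prop :=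
  Function.Injective o ∧ ∀ i, a i ≤ o i ∧ o i ≤ b i ∧
    ∀ s, a i ≤ s → s < o i → ∃ j, j < i ∧ o j = s

/-- `(a, b)` is an interval parking function. -/
def IsIPF {n : ℕ} (a b : Fin n → Fin n) : Prop :=
  ∃ o, IsBOutcome a b o

/-- The conjugate (reverse complement) `x*` of `x`, with `x*(i) = n + 1 - x(n + 1 - i)`. -/
def pconj {n : ℕ} (f : Fin n → Fin n) : Fin n → Fin n :=
  fun i => (f i.rev).rev

/-- The pair `(x, y)` is reachable, `x ⊵_R y`: there is an IPF `(a, b)` with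
`O(a) = x` and `O(b*) = y*`. -/
def Reaches {n : ℕ} (x y : Fin n → Fin n) : Prop :=
  ∃ a b : Fin n → Fin n, IsIPF a b ∧ IsAOutcome a x ∧ IsAOutcome (pconj b) (pconj y)

/-- Pseudoreachability `x ≥_P y`: the reflexive-transitive closure of reachability. -/
def PseudoGE {n : ℕ} (x y : Equiv.Perm (Fin n)) : Prop :=
  Relation.ReflTransGen (fun u v : Equiv.Perm (Fin n) => Reaches ⇑u ⇑v) x y

/-- `#{k ∈ [i] : x(k) ≥ j}` (with `i`, `j` zero-indexed). -/
def bcount {n : ℕ} (x : Fin n → Fin n) (i j : Fin n) : ℕ :=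
  (Finset.univ.filter (fun k : Fin n => k ≤ i ∧ j ≤ x k)).card

/-- The Bruhat order `x ≥_B y` on the symmetric group. -/
def BruhatGE {n : ℕ} (x y : Equiv.Perm (Fin n)) : Prop :=
  ∀ i j : Fin n, bcount ⇑y i j ≤ bcount ⇑x i j

/-- The number of inversions (the Coxeter length) of `f`. -/
def invCount {n : ℕ} (f : Fin n → Fin n) : ℕ :=
  (Finset.univ.filter (fun p : Fin n × Fin n => p.1 < p.2 ∧ f p.2 < f p.1)).card

/-- The adjacent transposition `s_i` exchanging `i` and `i+1` (one-indexed),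
as a permutation of `Fin n`. -/
def sgen (n : ℕ) (i : ℕ) : Equiv.Perm (Fin n) :=
  if h : 1 ≤ i ∧ i < n then Equiv.swap ⟨i - 1, by omega⟩ ⟨i, h.2⟩ else 1

/-- Left weak order: `x ≥_W y` iff `x = s_{i₁} ⋯ s_{i_k} · y` with `ℓ(x) = ℓ(y) + k`. -/
def WeakGE {n : ℕ} (x y : Equiv.Perm (Fin n)) : Prop :=
  ∃ l : List ℕ, (∀ i ∈ l, 1 ≤ i ∧ i ≤ n - 1) ∧
    x = (l.map (sgen n)).prod * y ∧ invCount ⇑x = invCount ⇑y + l.length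

/-- The projection `x ↦ x̂` deleting the last position and the value `x(n)`. -/
def hatf {n : ℕ} (x : Fin (n + 1) → Fin (n + 1)) : Fin n → Fin n :=
  fun i =>
    if h : (x i.castSucc).val < (x (Fin.last n)).val
    then ⟨(x i.castSucc).val, by have h1 := (x (Fin.last n)).isLt; omega⟩
    else ⟨(x i.castSucc).val - 1, by have h1 := (x i.castSucc).isLt; have h2 := i.isLt; omega⟩

/-- `lam n f k` is `λ_k` of the permutation of `[n]` with one-line notation `f(1), …, f(n)`
(one-indexed): `λ_{n-1}(x) = n - x(n)` and `λ_k(x) = λ_k(x̄)` for `k ≤ n - 2`, where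
`x̄ ∈ S_{n-1}` is the restriction of `u⁻¹·x` (`u = s_{x(n)} ⋯ s_{n-1}`), concretely
`x̄(i) = x(i)` if `x(i) < x(n)` and `x̄(i) = x(i) - 1` if `x(i) > x(n)`. -/
def lam : ℕ → (ℕ → ℕ) → ℕ → ℕ
  | 0, _, _ => 0
  | n + 1, f, k =>
    if k = n then (n + 1) - f (n + 1)
    else lam n (fun i => if f i < f (n + 1) then f i else f i - 1) k

/-- The one-line notation of `x`, as a one-indexed function `ℕ → ℕ`. -/
def oneline {n : ℕ} (x : Fin n → Fin n) : ℕ → ℕ :=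
  fun i => if h : i - 1 < n then (x ⟨i - 1, h⟩).val + 1 else 0

/-- `y` contains the pattern `σ`. -/
def ContainsPattern {n m : ℕ} (y : Equiv.Perm (Fin n)) (σ : Equiv.Perm (Fin m)) : Prop :=
  ∃ f : Fin m → Fin n, StrictMono f ∧ ∀ j k, y (f j) < y (f k) ↔ σ j < σ k

/-- `x` is an AR (Arndt–Riehl) permutation: `x⁻¹(i) ≤ i + 1` for all `i ∈ [n]`. -/
def IsAR {n : ℕ} (x : Equiv.Perm (Fin n)) : Prop :=
  ∀ i : Fin n, (x.symm i).val ≤ i.val + 1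

open Finset

section

variable {n : ℕ}

lemma bcount_add_card_filter_lt (f : Fin n → Fin n) (i t : Fin n) :
    bcount f i t + #{k ∈ Iic i | f k < t} = i + 1 := by
  have hsplit := card_filter_add_card_filter_not (s := Iic i) (fun k => t ≤ f k)
  simp only [not_le, Fin.card_Iic] at hsplit
  rw [bcount, ← hsplit]
  congr 2
  ext k
  simp

lemma BruhatGE.card_filter_lt_le {x y : Equiv.Perm (Fin n)} (hB : BruhatGE x y) (i t : Fin n) :
    #{k ∈ Iio i | x k < t} ≤ #{k ∈ Iio i | y k < t} := by
  rcases Nat.eq_zero_or_pos i with hi | hi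
  · have : Iio i = ∅ := by ext k; simp [Fin.lt_def, hi]
    simp [this]
  · set i₁ : Fin n := ⟨i - 1, by omega⟩
    have hIio : Iio i = Iic i₁ := by
      ext k; simp only [mem_Iio, mem_Iic, Fin.lt_def, Fin.le_def, i₁]; omega
    have := hB i₁ t
    have := bcount_add_card_filter_lt x i₁ t
    have := bcount_add_card_filter_lt y i₁ t
    rw [hIio]
    omega

lemma IsAR.min_le_card_filter_lt {x : Equiv.Perm (Fin n)} (hx : IsAR x) {i t : Fin n}
    (hti : t ≤ x i) : min (t : ℕ) i ≤ #{k ∈ Iio i | x k < t} := by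
  have hcard : #(Iio (min t i)) = min (t : ℕ) i := by simp
  rw [← hcard]
  -- `x⁻¹` sends a value `v < min t i` to a position `≤ v + 1 ≤ i`, and not to `i` as `t ≤ x i`.
  refine card_le_card_of_injOn x.symm (fun v hv => ?_) x.symm.injective.injOn
  simp only [coe_Iio, Set.mem_Iio, lt_min_iff, coe_filter, mem_Iio, Set.mem_ofPred_eq,
    Equiv.apply_symm_apply] at hv ⊢
  have hne : x.symm v ≠ i := by
    rintro rfl
    exact absurd hti (not_le.2 (by simpa using hv.1))
  have := hx v
  refine ⟨?_, hv.1⟩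
  rw [Fin.lt_def] at hv ⊢
  have := Fin.val_ne_of_ne hne
  omega

lemma card_filter_lt_lt_min {y : Fin n → Fin n} (hy : Function.Injective y) {i j t : Fin n}
    (hyi : y i < t) (hji : j < i) (hyj : y j = t) :
    #{k ∈ Iio i | y k < t} < min (t : ℕ) i := by
  have hlt_t : #{k ∈ Iio i | y k < t} ≤ #((Iio t).erase (y i)) := by
    refine card_le_card_of_injOn y (fun k hk => ?_) hy.injOn
    simp only [coe_filter, mem_Iio, Set.mem_ofPred_eq, coe_erase, coe_Iio] at hk ⊢
    exact ⟨hk.2, fun h => (hy h ▸ hk.1).false⟩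
  have hlt_i : #{k ∈ Iio i | y k < t} ≤ #((Iio i).erase j) := by
    refine card_le_card (fun k hk => ?_)
    simp only [mem_filter, mem_Iio, mem_erase] at hk ⊢
    exact ⟨fun h => (h ▸ hyj ▸ hk.2).false, hk.1⟩
  rw [card_erase_of_mem (by simpa using hyi), Fin.card_Iio] at hlt_t
  rw [card_erase_of_mem (by simpa using hji), Fin.card_Iio] at hlt_i
  have : (j : ℕ) < i := hji
  have : (y i : ℕ) < t := hyi
  omega

lemma lt_symm_apply_of_bruhatGE_of_isAR {x y : Equiv.Perm (Fin n)} (hB : BruhatGE x y)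
    (hx : IsAR x) {i t : Fin n} (hyi : y i < t) (hxi : t ≤ x i) : i < y.symm t := by
  by_contra! hle
  have hne : y.symm t ≠ i := fun h => by simp [← h] at hyi
  have := hx.min_le_card_filter_lt hxi
  have := hB.card_filter_lt_le i t
  have := card_filter_lt_lt_min y.injective hyi (lt_of_le_of_ne hle hne) (y.apply_symm_apply t)
  omega

lemma isAOutcome_self {o : Fin n → Fin n} (ho : Function.Injective o) :
    IsAOutcome o o :=
  ⟨ho, fun _ => ⟨le_rfl, fun _ h₁ h₂ => absurd (h₁.trans_lt h₂) (lt_irrefl _)⟩⟩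

lemma isIPF_of_le {a b : Fin n → Fin n} (ha : Function.Injective a) (hab : a ≤ b) :
    IsIPF a b :=
  ⟨a, ha, fun i => ⟨le_rfl, hab i, fun _ h₁ h₂ => absurd (h₁.trans_lt h₂) (lt_irrefl _)⟩⟩

lemma isAOutcome_pconj {b o : Fin n → Fin n} (ho : Function.Injective o)
    (h : ∀ i, o i ≤ b i ∧ ∀ s, o i < s → s ≤ b i → ∃ j, i < j ∧ o j = s) :
    IsAOutcome (pconj b) (pconj o) := by
  refine ⟨fun u v huv => Fin.rev_injective (ho (Fin.rev_injective huv)), fun i =>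
    ⟨Fin.rev_le_rev.2 (h i.rev).1, fun s hbs hso => ?_⟩⟩
  obtain ⟨j, hij, hj⟩ := (h i.rev).2 s.rev (Fin.lt_rev_iff.1 hso) (Fin.rev_le_iff.1 hbs)
  exact ⟨j.rev, Fin.rev_lt_iff.2 hij, by simp [pconj, hj]⟩

end

/-- Theorem `thm:x`. If `x ≥_B y` and `x` is an AR permutation,
then `x ⊵_R y`. -/
theorem stmt19 {n : ℕ} (x y : Equiv.Perm (Fin n)) (hB : BruhatGE x y) (hx : IsAR x) :
    Reaches ⇑x ⇑y := by
  refine ⟨x, x ⊔ y, isIPF_of_le x.injective le_sup_left, isAOutcome_self x.injective,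
    isAOutcome_pconj y.injective fun i => ⟨le_sup_right, fun s hys hsb => ?_⟩⟩
  have hsx : s ≤ x i := (le_sup_iff.1 hsb).resolve_right hys.not_ge
  exact ⟨y.symm s, lt_symm_apply_of_bruhatGE_of_isAR hB hx hys hsx, y.apply_symm_apply s⟩
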